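/- Let A be an invertible linear map of ℝ^d, let L₀ ⊆ ℝ^d be a nonzero A-invariant linear subspace, let λ₀ < 0 and ε ∈ (0, −λ₀). Let G, H : ℝ^d → ℝ^d be bijections with H ∘ G = A ∘ H and sup_{x∈ℝ^d} ‖H(x) − x‖ ≤ C for some C ≥ 0, and set S := H^{−1}(L₀), noting that G(S) = S. Suppose there is a function ρ : S × S → [0, ∞) such that: (i) ρ(x,y) ≥ ‖x − y‖ for all x, y ∈ S; (ii) there are constants a₀, b₀ > 0 with ρ(x,y) ≤ a₀·‖x − y‖ + b₀ for all x, y ∈ S; (iii) e^{λ₀−ε}·ρ(x,y) ≤ ρ(G(x), G(y)) ≤ e^{λ₀+ε}·ρ(x,y) for all x, y ∈ S. Then every complex eigenvalue λ of the restriction of A to L₀ satisfies λ₀ − ε ≤ log|λ| ≤ λ₀ + ε. -/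

import Mathlib

/-!
Conjugating by `H` turns the dynamics of `G` on the leaf `S = H⁻¹(L₀)` into that of `A` on `L₀`
up to an additive error `2C`. Since `ρ` is comparable to the ambient distance up to an affine
error, this gives `e^{n(λ₀-ε)}‖v‖ ≤ a₀‖Aⁿv‖ + K` and `‖Aⁿv‖ ≤ a₀e^{n(λ₀+ε)}‖v‖ + K` on `L₀`,
and rescaling `v` removes the constant `K`. In coordinates, the real and imaginary parts of a
complex eigenvector for `λ` obey the same bounds, which pins `|λ|ⁿ` between constant multiples of
`e^{n(λ₀-ε)}` and `e^{n(λ₀+ε)}`.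
-/

open Filter Topology Function Set Matrix

theorem le_of_forall_pow_le_mul_pow {x y D : ℝ} (hy : 0 ≤ y) (h : ∀ n : ℕ, x ^ n ≤ D * y ^ n) :
    x ≤ y := by
  by_contra! hyx
  have hx : 0 < x := hy.trans_lt hyx
  have hlim : Tendsto (fun n : ℕ => D * (y / x) ^ n) atTop (𝓝 0) := by
    simpa using (tendsto_pow_atTop_nhds_zero_of_lt_one (div_nonneg hy hx.le)
      ((div_lt_one hx).2 hyx)).const_mul D
  have hge : ∀ n : ℕ, 1 ≤ D * (y / x) ^ n := fun n => by
    rw [div_pow, mul_div_assoc', le_div_iff₀ (pow_pos hx n), one_mul]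
    exact h n
  exact absurd (ge_of_tendsto' hlim hge) (by norm_num)

theorem le_of_forall_pos_mul_le_mul_add {X Y D : ℝ} (h : ∀ t : ℝ, 0 < t → t * X ≤ t * Y + D) :
    X ≤ Y := by
  have hev : ∀ᶠ t in atTop, X ≤ Y + D / t := (eventually_gt_atTop 0).mono fun t ht => by
    rw [← sub_le_iff_le_add', le_div_iff₀ ht]
    linarith [h t ht]
  have hlim : Tendsto (fun t : ℝ => Y + D / t) atTop (𝓝 Y) := by
    simpa using (tendsto_const_nhds (x := D)).div_atTop tendsto_id |>.const_add Y
  exact ge_of_tendsto hlim hev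

theorem LinearMap.mul_norm_le_of_mul_norm_le_add {E F F' : Type*} [SeminormedAddCommGroup E]
    [NormedSpace ℝ E] [SeminormedAddCommGroup F] [NormedSpace ℝ F] [SeminormedAddCommGroup F']
    [NormedSpace ℝ F'] (S : E →ₗ[ℝ] F) (T : E →ₗ[ℝ] F') {L : Submodule ℝ E} {c a b : ℝ}
    (h : ∀ u ∈ L, c * ‖S u‖ ≤ a * ‖T u‖ + b) {u : E} (hu : u ∈ L) :
    c * ‖S u‖ ≤ a * ‖T u‖ := by
  refine le_of_forall_pos_mul_le_mul_add (D := b) fun t ht => ?_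
  have := h (t • u) (L.smul_mem t hu)
  rw [map_smul, map_smul, norm_smul, norm_smul, Real.norm_of_nonneg ht.le] at this
  linarith

theorem norm_map_sub_map_le {E : Type*} [SeminormedAddCommGroup E] {H : E → E} {C : ℝ}
    (hH : ∀ x, ‖H x - x‖ ≤ C) (x y : E) : ‖H x - H y‖ ≤ ‖x - y‖ + 2 * C :=
  calc ‖H x - H y‖ = ‖(H x - x) + (x - y) - (H y - y)‖ := by congr 1; abel
    _ ≤ ‖H x - x‖ + ‖x - y‖ + ‖H y - y‖ := norm_sub_le_of_le (norm_add_le _ _) le_rfl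
    _ ≤ ‖x - y‖ + 2 * C := by linarith [hH x, hH y]

theorem norm_sub_le_norm_map_sub_map {E : Type*} [SeminormedAddCommGroup E] {H : E → E} {C : ℝ}
    (hH : ∀ x, ‖H x - x‖ ≤ C) (x y : E) : ‖x - y‖ ≤ ‖H x - H y‖ + 2 * C :=
  calc ‖x - y‖ = ‖(H x - H y) - (H x - x) + (H y - y)‖ := by congr 1; abel
    _ ≤ ‖H x - H y‖ + ‖H x - x‖ + ‖H y - y‖ := norm_add_le_of_le (norm_sub_le _ _) le_rfl
    _ ≤ ‖H x - H y‖ + 2 * C := by linarith [hH x, hH y]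

theorem iterate_le_pow_mul {α : Type*} {g : α → α} {s : Set α} (hg : MapsTo g s s)
    {φ : α → α → ℝ} {β : ℝ} (hβ : 0 ≤ β) (h : ∀ x ∈ s, ∀ y ∈ s, φ (g x) (g y) ≤ β * φ x y)
    (n : ℕ) {x y : α} (hx : x ∈ s) (hy : y ∈ s) : φ (g^[n] x) (g^[n] y) ≤ β ^ n * φ x y := by
  induction n with
  | zero => simp
  | succ n ih =>
    rw [iterate_succ_apply', iterate_succ_apply', pow_succ', mul_assoc]
    exact (h _ (hg.iterate n hx) _ (hg.iterate n hy)).trans (mul_le_mul_of_nonneg_left ih hβ)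

section Conjugacy

variable {E : Type*} [NormedAddCommGroup E] [NormedSpace ℝ E] {A : E →ₗ[ℝ] E}
  {L : Submodule ℝ E} {G H : E ≃ E} {C a b : ℝ} {ρ : E → E → ℝ}

theorem Function.Semiconj.apply_iterate_eq_pow_apply (hconj : Semiconj H G A) (n : ℕ) (x : E) :
    H (G^[n] x) = (A ^ n) (H x) := by
  rw [Module.End.coe_pow]
  exact hconj.iterate_right n x

theorem norm_pow_apply_le_of_semiconj (hAL : MapsTo A L L) (hconj : Semiconj H G A)
    (hH : ∀ x, ‖H x - x‖ ≤ C)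
    (hρ1 : ∀ x y, H x ∈ L → H y ∈ L → ‖x - y‖ ≤ ρ x y)
    (hρ2 : ∀ x y, H x ∈ L → H y ∈ L → ρ x y ≤ a * ‖x - y‖ + b) (ha : 0 ≤ a)
    {β : ℝ} (hβ : 0 ≤ β) (hρG : ∀ x y, H x ∈ L → H y ∈ L → ρ (G x) (G y) ≤ β * ρ x y)
    (n : ℕ) {v : E} (hv : v ∈ L) : ‖(A ^ n) v‖ ≤ a * β ^ n * ‖v‖ := by
  have hS := hconj.mapsTo_preimage hAL
  have key : ∀ u ∈ L, ‖(A ^ n) u‖ ≤ a * β ^ n * ‖u‖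
      + (β ^ n * (2 * a * C + b) + 2 * C) := by
    intro u hu
    obtain ⟨x, rfl⟩ := H.surjective u
    obtain ⟨y, hy⟩ := H.surjective 0
    have hxS : x ∈ H ⁻¹' L := hu
    have hyS : y ∈ H ⁻¹' L := by simp [mem_preimage, hy]
    calc ‖(A ^ n) (H x)‖ = ‖H (G^[n] x) - H (G^[n] y)‖ := by
          rw [hconj.apply_iterate_eq_pow_apply, hconj.apply_iterate_eq_pow_apply, hy, map_zero,
            sub_zero]
      _ ≤ ‖G^[n] x - G^[n] y‖ + 2 * C := norm_map_sub_map_le hH _ _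
      _ ≤ ρ (G^[n] x) (G^[n] y) + 2 * C := by
          gcongr; exact hρ1 _ _ (hS.iterate n hxS) (hS.iterate n hyS)
      _ ≤ β ^ n * ρ x y + 2 * C := by
          gcongr; exact iterate_le_pow_mul hS hβ (fun x hx y hy => hρG x y hx hy) n hxS hyS
      _ ≤ β ^ n * (a * ‖x - y‖ + b) + 2 * C := by gcongr; exact hρ2 x y hxS hyS
      _ ≤ β ^ n * (a * (‖H x‖ + 2 * C) + b) + 2 * C := by
          gcongr; simpa [hy] using norm_sub_le_norm_map_sub_map hH x y
      _ = a * β ^ n * ‖H x‖ + (β ^ n * (2 * a * C + b) + 2 * C) := by ring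
  simpa using
    (A ^ n).mul_norm_le_of_mul_norm_le_add (c := 1) LinearMap.id (by simpa using key) hv

theorem pow_mul_norm_le_norm_pow_apply_of_semiconj (hAL : MapsTo A L L)
    (hconj : Semiconj H G A) (hH : ∀ x, ‖H x - x‖ ≤ C)
    (hρ1 : ∀ x y, H x ∈ L → H y ∈ L → ‖x - y‖ ≤ ρ x y)
    (hρ2 : ∀ x y, H x ∈ L → H y ∈ L → ρ x y ≤ a * ‖x - y‖ + b) (ha : 0 ≤ a)
    {α : ℝ} (hα : 0 ≤ α) (hρG : ∀ x y, H x ∈ L → H y ∈ L → α * ρ x y ≤ ρ (G x) (G y))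
    (n : ℕ) {v : E} (hv : v ∈ L) : α ^ n * ‖v‖ ≤ a * ‖(A ^ n) v‖ := by
  have hS := hconj.mapsTo_preimage hAL
  have key : ∀ u ∈ L, α ^ n * ‖u‖ ≤ a * ‖(A ^ n) u‖
      + (α ^ n * (2 * C) + 2 * a * C + b) := by
    intro u hu
    obtain ⟨x, rfl⟩ := H.surjective u
    obtain ⟨y, hy⟩ := H.surjective 0
    have hxS : x ∈ H ⁻¹' L := hu
    have hyS : y ∈ H ⁻¹' L := by simp [mem_preimage, hy]
    -- the upper iteration bound, applied to `-ρ`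
    have hiter : α ^ n * ρ x y ≤ ρ (G^[n] x) (G^[n] y) := by
      have := iterate_le_pow_mul (φ := fun x y => -ρ x y) hS hα
        (fun x hx y hy => by linarith [hρG x y hx hy]) n hxS hyS
      linarith
    calc α ^ n * ‖H x‖ ≤ α ^ n * (‖x - y‖ + 2 * C) := by
          gcongr; simpa [hy] using norm_map_sub_map_le hH x y
      _ ≤ α ^ n * ρ x y + α ^ n * (2 * C) := by
          rw [mul_add]; gcongr; exact hρ1 x y hxS hyS
      _ ≤ ρ (G^[n] x) (G^[n] y) + α ^ n * (2 * C) := by gcongr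
      _ ≤ a * ‖G^[n] x - G^[n] y‖ + b + α ^ n * (2 * C) := by
          gcongr; exact hρ2 _ _ (hS.iterate n hxS) (hS.iterate n hyS)
      _ ≤ a * (‖H (G^[n] x) - H (G^[n] y)‖ + 2 * C) + b + α ^ n * (2 * C) := by
          gcongr; exact norm_sub_le_norm_map_sub_map hH _ _
      _ = a * ‖(A ^ n) (H x)‖ + (α ^ n * (2 * C) + 2 * a * C + b) := by
          rw [hconj.apply_iterate_eq_pow_apply, hconj.apply_iterate_eq_pow_apply, hy, map_zero,
            sub_zero]; ring
  simpa using LinearMap.id.mul_norm_le_of_mul_norm_le_add (A ^ n) (by simpa using key) hv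

end Conjugacy

namespace Pi

variable {ι : Type*} [Fintype ι]

theorem norm_re_le (z : ι → ℂ) : ‖fun j => (z j).re‖ ≤ ‖z‖ :=
  (pi_norm_le_iff_of_nonneg (norm_nonneg z)).2 fun j =>
    (Complex.abs_re_le_norm (z j)).trans (norm_le_pi_norm z j)

theorem norm_im_le (z : ι → ℂ) : ‖fun j => (z j).im‖ ≤ ‖z‖ :=
  (pi_norm_le_iff_of_nonneg (norm_nonneg z)).2 fun j =>
    (Complex.abs_im_le_norm (z j)).trans (norm_le_pi_norm z j)

theorem norm_le_norm_re_add_norm_im (z : ι → ℂ) :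
    ‖z‖ ≤ ‖fun j => (z j).re‖ + ‖fun j => (z j).im‖ :=
  (pi_norm_le_iff_of_nonneg (by positivity)).2 fun j =>
    (Complex.norm_le_abs_re_add_abs_im (z j)).trans <| add_le_add
      (norm_le_pi_norm (fun j => (z j).re) j) (norm_le_pi_norm (fun j => (z j).im) j)

end Pi

namespace Matrix

variable {ι : Type*} [Fintype ι]

theorem re_mulVec_map_ofReal (M : Matrix ι ι ℝ) (w : ι → ℂ) :
    (fun i => ((M.map (algebraMap ℝ ℂ) *ᵥ w) i).re) = M *ᵥ fun j => (w j).re := by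
  ext i
  simp [mulVec, dotProduct, Complex.re_sum]

theorem im_mulVec_map_ofReal (M : Matrix ι ι ℝ) (w : ι → ℂ) :
    (fun i => ((M.map (algebraMap ℝ ℂ) *ᵥ w) i).im) = M *ᵥ fun j => (w j).im := by
  ext i
  simp [mulVec, dotProduct, Complex.im_sum]

variable [DecidableEq ι] {M : Matrix ι ι ℝ} {μ : ℂ} {w : ι → ℂ}

theorem pow_mulVec_of_hasEigenvector {K : Type*} [CommRing K] {N : Matrix ι ι K} {μ : K}
    {w : ι → K} (hw : Module.End.HasEigenvector (toLin' N) μ w) (n : ℕ) :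
    (N ^ n) *ᵥ w = μ ^ n • w := by
  rw [← toLin'_apply, toLin'_pow, hw.pow_apply]

theorem map_pow_mulVec_of_hasEigenvector
    (hw : Module.End.HasEigenvector (toLin' (M.map (algebraMap ℝ ℂ))) μ w) (n : ℕ) :
    (M ^ n).map (algebraMap ℝ ℂ) *ᵥ w = μ ^ n • w := by
  rw [← RingHom.mapMatrix_apply, map_pow]
  exact pow_mulVec_of_hasEigenvector hw n

theorem norm_le_of_hasEigenvector
    (hw : Module.End.HasEigenvector (toLin' (M.map (algebraMap ℝ ℂ))) μ w) {c r : ℝ}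
    (hc : 0 ≤ c) (hr : 0 ≤ r) (h : ∀ (n : ℕ) (x : ι → ℝ), ‖(M ^ n) *ᵥ x‖ ≤ c * r ^ n * ‖x‖) :
    ‖μ‖ ≤ r := by
  have hw0 : 0 < ‖w‖ := norm_pos_iff.2 hw.2
  refine le_of_forall_pow_le_mul_pow (D := 2 * c) hr fun n => le_of_mul_le_mul_right ?_ hw0
  calc ‖μ‖ ^ n * ‖w‖ = ‖μ ^ n • w‖ := by rw [norm_smul, norm_pow]
    _ ≤ ‖fun j => ((μ ^ n • w) j).re‖ + ‖fun j => ((μ ^ n • w) j).im‖ :=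
        Pi.norm_le_norm_re_add_norm_im _
    _ = ‖(M ^ n) *ᵥ fun j => (w j).re‖ + ‖(M ^ n) *ᵥ fun j => (w j).im‖ := by
        rw [← re_mulVec_map_ofReal, ← im_mulVec_map_ofReal, map_pow_mulVec_of_hasEigenvector hw]
    _ ≤ c * r ^ n * ‖fun j => (w j).re‖ + c * r ^ n * ‖fun j => (w j).im‖ :=
        add_le_add (h _ _) (h _ _)
    _ ≤ c * r ^ n * ‖w‖ + c * r ^ n * ‖w‖ := by
        gcongr
        exacts [Pi.norm_re_le w, Pi.norm_im_le w]
    _ = 2 * c * r ^ n * ‖w‖ := by ring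

theorem le_norm_of_hasEigenvector
    (hw : Module.End.HasEigenvector (toLin' (M.map (algebraMap ℝ ℂ))) μ w) {c r : ℝ}
    (hc : 0 ≤ c) (hr : 0 ≤ r) (h : ∀ (n : ℕ) (x : ι → ℝ), r ^ n * ‖x‖ ≤ c * ‖(M ^ n) *ᵥ x‖) :
    r ≤ ‖μ‖ := by
  have hw0 : 0 < ‖w‖ := norm_pos_iff.2 hw.2
  refine le_of_forall_pow_le_mul_pow (D := 2 * c) (norm_nonneg μ) fun n =>
    le_of_mul_le_mul_right ?_ hw0
  calc r ^ n * ‖w‖ ≤ r ^ n * (‖fun j => (w j).re‖ + ‖fun j => (w j).im‖) := by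
        gcongr; exact Pi.norm_le_norm_re_add_norm_im w
    _ ≤ c * ‖(M ^ n) *ᵥ fun j => (w j).re‖ + c * ‖(M ^ n) *ᵥ fun j => (w j).im‖ := by
        rw [mul_add]; exact add_le_add (h _ _) (h _ _)
    _ = c * ‖fun j => ((μ ^ n • w) j).re‖ + c * ‖fun j => ((μ ^ n • w) j).im‖ := by
        rw [← re_mulVec_map_ofReal, ← im_mulVec_map_ofReal, map_pow_mulVec_of_hasEigenvector hw]
    _ ≤ c * ‖μ ^ n • w‖ + c * ‖μ ^ n • w‖ := by
        gcongr
        exacts [Pi.norm_re_le _, Pi.norm_im_le _]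
    _ = 2 * c * ‖μ‖ ^ n * ‖w‖ := by rw [norm_smul, norm_pow]; ring

end Matrix

section

variable {R K V ι : Type*} [CommRing R] [Field K] [AddCommGroup V] [Module R V]
  [Fintype ι] [DecidableEq ι]

theorem LinearMap.exists_hasEigenvector_toMatrix_map [Module.Free R V] [Module.Finite R V]
    (f : V →ₗ[R] V) (b : Module.Basis ι R V) (φ : R →+* K) {μ : K}
    (hμ : (f.charpoly.map φ).IsRoot μ) :
    ∃ w, Module.End.HasEigenvector (Matrix.toLin' ((toMatrix b b f).map φ)) μ w := by
  rw [← LinearMap.charpoly_toMatrix f b, ← Matrix.charpoly_map, ← Matrix.charpoly_toLin',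
    ← Module.End.hasEigenvalue_iff_isRoot_charpoly] at hμ
  exact hμ.exists_hasEigenvector

theorem LinearMap.toMatrix_mulVec (b : Module.Basis ι R V) (g : V →ₗ[R] V) (x : ι → R) :
    toMatrix b b g *ᵥ x = b.equivFun (g (b.equivFun.symm x)) := by
  have := LinearMap.toMatrix_mulVec_repr b b g (b.equivFun.symm x)
  rwa [← b.equivFun_apply, ← b.equivFun_apply, b.equivFun.apply_symm_apply] at this

end

namespace ContinuousLinearEquiv

variable {V W : Type*} [SeminormedAddCommGroup V] [NormedSpace ℝ V] [SeminormedAddCommGroup W]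
  [NormedSpace ℝ W] (e : V ≃L[ℝ] W) {g : V → V} {s t : ℝ}

theorem norm_apply_conj_le (hs : 0 ≤ s) (h : ∀ v, ‖g v‖ ≤ s * ‖v‖) (x : W) :
    ‖e (g (e.symm x))‖ ≤ ‖(e : V →L[ℝ] W)‖ * s * ‖(e.symm : W →L[ℝ] V)‖ * ‖x‖ :=
  calc ‖e (g (e.symm x))‖ ≤ ‖(e : V →L[ℝ] W)‖ * ‖g (e.symm x)‖ := (e : V →L[ℝ] W).le_opNorm _
    _ ≤ ‖(e : V →L[ℝ] W)‖ * (s * (‖(e.symm : W →L[ℝ] V)‖ * ‖x‖)) := by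
        gcongr
        exact (h _).trans (by gcongr; exact (e.symm : W →L[ℝ] V).le_opNorm x)
    _ = _ := by ring

theorem mul_norm_le_norm_apply_conj (hs : 0 ≤ s) (ht : 0 ≤ t) (h : ∀ v, s * ‖v‖ ≤ t * ‖g v‖)
    (x : W) : s * ‖x‖ ≤ ‖(e : V →L[ℝ] W)‖ * t * ‖(e.symm : W →L[ℝ] V)‖ * ‖e (g (e.symm x))‖ :=
  calc s * ‖x‖ = s * ‖e (e.symm x)‖ := by rw [e.apply_symm_apply]
    _ ≤ ‖(e : V →L[ℝ] W)‖ * (s * ‖e.symm x‖) := by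
        rw [mul_left_comm]; gcongr; exact (e : V →L[ℝ] W).le_opNorm _
    _ ≤ ‖(e : V →L[ℝ] W)‖ * (t * ‖e.symm (e (g (e.symm x)))‖) := by
        rw [e.symm_apply_apply]; exact mul_le_mul_of_nonneg_left (h _) (norm_nonneg _)
    _ ≤ ‖(e : V →L[ℝ] W)‖ * (t * (‖(e.symm : W →L[ℝ] V)‖ * ‖e (g (e.symm x))‖)) := by
        gcongr; exact (e.symm : W →L[ℝ] V).le_opNorm _
    _ = _ := by ring

end ContinuousLinearEquiv

section FiniteDimensional

variable {V : Type*} [NormedAddCommGroup V] [NormedSpace ℝ V] [FiniteDimensional ℝ V]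
  (f : V →ₗ[ℝ] V) {c r : ℝ} {μ : ℂ}

theorem LinearMap.norm_le_of_isRoot_charpoly_map (hc : 0 ≤ c) (hr : 0 ≤ r)
    (h : ∀ (n : ℕ) (v : V), ‖(f ^ n) v‖ ≤ c * r ^ n * ‖v‖)
    (hμ : (f.charpoly.map (algebraMap ℝ ℂ)).IsRoot μ) : ‖μ‖ ≤ r := by
  let b := Module.finBasis ℝ V
  obtain ⟨w, hw⟩ := f.exists_hasEigenvector_toMatrix_map b _ hμ
  let e := b.equivFun.toContinuousLinearEquiv
  refine Matrix.norm_le_of_hasEigenvector hw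
    (c := ‖e.toContinuousLinearMap‖ * c * ‖e.symm.toContinuousLinearMap‖) (by positivity) hr
    fun n x => ?_
  rw [LinearMap.toMatrix_pow, LinearMap.toMatrix_mulVec]
  exact (e.norm_apply_conj_le (by positivity) (h n) x).trans_eq (by ring)

theorem LinearMap.le_norm_of_isRoot_charpoly_map (hc : 0 ≤ c) (hr : 0 ≤ r)
    (h : ∀ (n : ℕ) (v : V), r ^ n * ‖v‖ ≤ c * ‖(f ^ n) v‖)
    (hμ : (f.charpoly.map (algebraMap ℝ ℂ)).IsRoot μ) : r ≤ ‖μ‖ := by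
  let b := Module.finBasis ℝ V
  obtain ⟨w, hw⟩ := f.exists_hasEigenvector_toMatrix_map b _ hμ
  let e := b.equivFun.toContinuousLinearEquiv
  refine Matrix.le_norm_of_hasEigenvector hw
    (c := ‖e.toContinuousLinearMap‖ * c * ‖e.symm.toContinuousLinearMap‖) (by positivity) hr
    fun n x => ?_
  rw [LinearMap.toMatrix_pow, LinearMap.toMatrix_mulVec]
  exact e.mul_norm_le_norm_apply_conj (by positivity) hc (h n) x

end FiniteDimensional

theorem stmt_9_general (d : ℕ) (A : (Fin d → ℝ) ≃ₗ[ℝ] (Fin d → ℝ))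
    (L0 : Submodule ℝ (Fin d → ℝ))
    (hL0 : ∀ x ∈ L0, A.toLinearMap x ∈ L0)
    (lam0 ε : ℝ)
    (G H : (Fin d → ℝ) ≃ (Fin d → ℝ)) (C : ℝ)
    (hconj : ∀ x, H (G x) = A (H x)) (hbd : ∀ x, ‖H x - x‖ ≤ C)
    (ρ : (Fin d → ℝ) → (Fin d → ℝ) → ℝ)
    (hρ1 : ∀ x y : Fin d → ℝ, H x ∈ L0 → H y ∈ L0 → ‖x - y‖ ≤ ρ x y)
    (a0 b0 : ℝ) (ha0 : 0 < a0)
    (hρ2 : ∀ x y : Fin d → ℝ, H x ∈ L0 → H y ∈ L0 → ρ x y ≤ a0 * ‖x - y‖ + b0)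
    (hρ3 : ∀ x y : Fin d → ℝ, H x ∈ L0 → H y ∈ L0 →
      Real.exp (lam0 - ε) * ρ x y ≤ ρ (G x) (G y) ∧
        ρ (G x) (G y) ≤ Real.exp (lam0 + ε) * ρ x y) :
    ∀ lam : ℂ, ((A.toLinearMap.restrict hL0).charpoly.map (algebraMap ℝ ℂ)).IsRoot lam →
      lam0 - ε ≤ Real.log ‖lam‖ ∧ Real.log ‖lam‖ ≤ lam0 + ε := by
  intro lam hroot
  have hrestrict (n : ℕ) (v : L0) :
      ‖((A.toLinearMap.restrict hL0) ^ n) v‖ = ‖(A.toLinearMap ^ n) v‖ := by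
    rw [Module.End.pow_restrict]; rfl
  have hup : ‖lam‖ ≤ Real.exp (lam0 + ε) :=
    LinearMap.norm_le_of_isRoot_charpoly_map _ ha0.le (Real.exp_nonneg _) (fun n v => by
      rw [hrestrict]
      exact norm_pow_apply_le_of_semiconj hL0 hconj hbd hρ1 hρ2 ha0.le (Real.exp_nonneg _)
        (fun x y hx hy => (hρ3 x y hx hy).2) n v.2) hroot
  have hlo : Real.exp (lam0 - ε) ≤ ‖lam‖ :=
    LinearMap.le_norm_of_isRoot_charpoly_map _ ha0.le (Real.exp_nonneg _) (fun n v => by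
      rw [hrestrict]
      exact pow_mul_norm_le_norm_pow_apply_of_semiconj hL0 hconj hbd hρ1 hρ2 ha0.le
        (Real.exp_nonneg _) (fun x y hx hy => (hρ3 x y hx hy).1) n v.2) hroot
  have hpos : 0 < ‖lam‖ := (Real.exp_pos _).trans_le hlo
  exact ⟨(Real.le_log_iff_exp_le hpos).2 hlo, (Real.log_le_iff_le_exp hpos).2 hup⟩

/-- A leafwise metric `ρ` on `S = H⁻¹(L₀)`, quasi-isometric to the ambient
distance and contracted by `G` at rates pinched between `e^{λ₀-ε}` and
`e^{λ₀+ε}`, forces every complex eigenvalue `λ` of the restriction of the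
linear model `A` to `L₀` to satisfy `λ₀ - ε ≤ log|λ| ≤ λ₀ + ε`. -/
theorem stmt_9 (d : ℕ) (A : (Fin d → ℝ) ≃ₗ[ℝ] (Fin d → ℝ))
    (L0 : Submodule ℝ (Fin d → ℝ)) (hL0ne : L0 ≠ ⊥)
    (hL0 : ∀ x ∈ L0, A.toLinearMap x ∈ L0)
    (lam0 ε : ℝ) (hlam0 : lam0 < 0) (hε : ε ∈ Set.Ioo 0 (-lam0))
    (G H : (Fin d → ℝ) ≃ (Fin d → ℝ)) (C : ℝ) (hC : 0 ≤ C)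
    (hconj : ∀ x, H (G x) = A (H x)) (hbd : ∀ x, ‖H x - x‖ ≤ C)
    (ρ : (Fin d → ℝ) → (Fin d → ℝ) → ℝ)
    (hρ0 : ∀ x y : Fin d → ℝ, H x ∈ L0 → H y ∈ L0 → 0 ≤ ρ x y)
    (hρ1 : ∀ x y : Fin d → ℝ, H x ∈ L0 → H y ∈ L0 → ‖x - y‖ ≤ ρ x y)
    (a0 b0 : ℝ) (ha0 : 0 < a0) (hb0 : 0 < b0)
    (hρ2 : ∀ x y : Fin d → ℝ, H x ∈ L0 → H y ∈ L0 → ρ x y ≤ a0 * ‖x - y‖ + b0)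
    (hρ3 : ∀ x y : Fin d → ℝ, H x ∈ L0 → H y ∈ L0 →
      Real.exp (lam0 - ε) * ρ x y ≤ ρ (G x) (G y) ∧
        ρ (G x) (G y) ≤ Real.exp (lam0 + ε) * ρ x y) :
    ∀ lam : ℂ, ((A.toLinearMap.restrict hL0).charpoly.map (algebraMap ℝ ℂ)).IsRoot lam →
      lam0 - ε ≤ Real.log ‖lam‖ ∧ Real.log ‖lam‖ ≤ lam0 + ε :=
  stmt_9_general d A L0 hL0 lam0 ε G H C hconj hbd ρ hρ1 a0 b0 ha0 hρ2 hρ3
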